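/- arXiv:math/0510472 — 3 statements merged into one kernel-verified Lean document; each statement's English description precedes it below -/
import Mathlib

section
/- Let 1 < p < ∞ and let A ≥ 0 be a constant such that for every smooth compactly supported f : ℝ → ℂ one has ‖x ↦ lim_{ε→0⁺}(1/π)∫_{{y ∈ ℝ : |y−x| ≥ ε}} f(y)/(y−x) dy‖_{L_p(ℝ)} ≤ A·‖f‖_{L_p(ℝ)}. Then for every smooth compactly supported g : ℂ → ℂ and every φ ∈ ℝ, the function z ↦ lim_{ε→0⁺}(1/π)∫_{{t ∈ ℝ : |t| ≥ ε}} g(z + t e^{iφ})/t dt belongs to L_p(ℂ) and its L_p(ℂ) norm is at most A·‖g‖_{L_p(ℂ)}. -/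
open MeasureTheory Filter Topology Real
open scoped ENNReal NNReal

lemma hilb_cont (g : ℂ → ℂ) (hgc : Continuous g) (hgs : HasCompactSupport g)
    (c : ℂ) (hc : ‖c‖ = 1) {ε : ℝ} (hε : 0 < ε) :
    Continuous (fun z : ℂ => ∫ t in {t : ℝ | ε ≤ |t|}, g (z + t * c) / (t : ℂ)) := by
  have hSmeas : MeasurableSet {t : ℝ | ε ≤ |t|} :=
    (isClosed_le continuous_const continuous_abs).measurableSet
  obtain ⟨r, hr⟩ : ∃ r, tsupport g ⊆ Metric.closedBall 0 r :=
    hgs.isBounded.subset_closedBall 0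
  obtain ⟨M, hM⟩ := hgc.bounded_above_of_compact_support hgs
  have hM0 : 0 ≤ M := le_trans (norm_nonneg _) (hM 0)
  rw [continuous_iff_continuousAt]
  intro z₀
  set R : ℝ := r + ‖z₀‖ + 1 with hR
  apply continuousAt_of_dominated
    (bound := (Metric.closedBall (0:ℝ) R).indicator fun _ => M / ε)
  · exact Eventually.of_forall fun z =>
      (((hgc.comp (by fun_prop)).measurable).div Complex.measurable_ofReal).aestronglyMeasurable
  · filter_upwards [Metric.ball_mem_nhds z₀ one_pos] with z hz
    refine (ae_restrict_iff' hSmeas).2 (Eventually.of_forall fun t ht => ?_)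
    have ht' : ε ≤ |t| := ht
    have hz' : ‖z‖ < ‖z₀‖ + 1 := by
      calc ‖z‖ ≤ ‖z₀‖ + ‖z - z₀‖ := by
            simpa using norm_add_le z₀ (z - z₀)
        _ < ‖z₀‖ + 1 := by
            have := Metric.mem_ball.1 hz
            rw [dist_eq_norm] at this
            linarith
    have hnorm : ‖g (z + t * c) / (t : ℂ)‖ = ‖g (z + t * c)‖ / |t| := by
      rw [norm_div, Complex.norm_real, Real.norm_eq_abs]
    by_cases htR : |t| ≤ R
    · have htmem : t ∈ Metric.closedBall (0:ℝ) R := by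
        simpa [Real.dist_eq] using htR
      rw [hnorm, Set.indicator_of_mem htmem]
      exact div_le_div₀ hM0 (hM _) hε ht'
    · push_neg at htR
      have hgz : g (z + t * c) = 0 := by
        apply image_eq_zero_of_notMem_tsupport
        intro hmem
        have h1 : ‖z + t * c‖ ≤ r := by simpa [Complex.dist_eq] using hr hmem
        have h2 : |t| - ‖z‖ ≤ ‖z + t * c‖ := by
          calc |t| - ‖z‖ = ‖t * c‖ - ‖z‖ := by
                rw [norm_mul, hc, mul_one, Complex.norm_real, Real.norm_eq_abs]
            _ ≤ ‖z + t * c‖ := by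
                have := norm_add_le (z + t * c) (-z)
                simp only [add_neg_cancel_comm] at this
                simpa [norm_neg] using sub_le_iff_le_add.2 this
        rw [hR] at htR
        linarith
      rw [hnorm, hgz]
      simp only [norm_zero, zero_div]
      exact Set.indicator_nonneg (fun _ _ => div_nonneg hM0 hε.le) t
  · rw [integrable_indicator_iff measurableSet_closedBall]
    refine integrableOn_const (ne_of_lt ?_) (by simp)
    exact lt_of_le_of_lt (Measure.restrict_apply_le _ _) measure_closedBall_lt_top
  · exact Eventually.of_forall fun t =>
      ((hgc.comp (by fun_prop)).div_const _).continuousAt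

lemma hilb_shift (g : ℂ → ℂ) (c : ℂ) (x y ε : ℝ) :
    ∫ y' in {y' : ℝ | ε ≤ |y' - x|}, g (c * ((y' : ℂ) + (y : ℂ) * Complex.I)) / ((y' : ℂ) - x)
      = ∫ t in {t : ℝ | ε ≤ |t|},
          g (c * ((x : ℂ) + (y : ℂ) * Complex.I) + (t : ℂ) * c) / (t : ℂ) := by
  have hS : MeasurableSet {y' : ℝ | ε ≤ |y' - x|} :=
    (isClosed_le continuous_const (by fun_prop)).measurableSet
  have hT : MeasurableSet {t : ℝ | ε ≤ |t|} :=
    (isClosed_le continuous_const continuous_abs).measurableSet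
  rw [← integral_indicator hS, ← integral_indicator hT,
    ← integral_add_right_eq_self (Set.indicator {y' : ℝ | ε ≤ |y' - x|}
      (fun y' : ℝ => g (c * ((y' : ℂ) + (y : ℂ) * Complex.I)) / ((y' : ℂ) - x))) x]
  congr 1
  funext t
  by_cases h : ε ≤ |t|
  · rw [Set.indicator_of_mem (by simpa using h), Set.indicator_of_mem (by exact h),
      show (c * (((t + x : ℝ) : ℂ) + (y : ℂ) * Complex.I)) =
        c * ((x : ℂ) + (y : ℂ) * Complex.I) + (t : ℂ) * c by push_cast; ring,
      show (((t + x : ℝ) : ℂ) - (x : ℂ)) = (t : ℂ) by push_cast; ring]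
  · rw [Set.indicator_of_notMem (by simpa using h), Set.indicator_of_notMem (by exact h)]

/-- If `A` bounds the one-dimensional Hilbert transform
`H[f](x) = P.V.(1/π)∫ f(y)/(y-x) dy` on `L_p(ℝ)` (for smooth compactly supported `f`),
then for every smooth compactly supported `g : ℂ → ℂ` and every direction `e^{iφ}`,
the Hilbert transform of `g` along lines in direction `e^{iφ}` lies in `L_p(ℂ)` with
norm at most `A·‖g‖_{L_p(ℂ)}`. -/
theorem stmt2 (p : ℝ) (hp : 1 < p) (A : ℝ) (hA : 0 ≤ A)
    (hHilbert : ∀ f : ℝ → ℂ, ContDiff ℝ (⊤ : ℕ∞) f → HasCompactSupport f →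
      ∀ H : ℝ → ℂ,
        (∀ x : ℝ, Tendsto
            (fun ε : ℝ => (1 / (π : ℂ)) * ∫ y in {y : ℝ | ε ≤ |y - x|}, f y / ((y : ℂ) - x))
            (𝓝[>] 0) (𝓝 (H x))) →
        eLpNorm H (ENNReal.ofReal p) volume ≤
          ENNReal.ofReal A * eLpNorm f (ENNReal.ofReal p) volume) :
    ∀ g : ℂ → ℂ, ContDiff ℝ (⊤ : ℕ∞) g → HasCompactSupport g → ∀ φ : ℝ,
      ∀ Hg : ℂ → ℂ,
        (∀ z : ℂ, Tendsto
            (fun ε : ℝ => (1 / (π : ℂ)) *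
              ∫ t in {t : ℝ | ε ≤ |t|}, g (z + t * Complex.exp (Complex.I * φ)) / (t : ℂ))
            (𝓝[>] 0) (𝓝 (Hg z))) →
        MemLp Hg (ENNReal.ofReal p) volume ∧
        eLpNorm Hg (ENNReal.ofReal p) volume ≤
          ENNReal.ofReal A * eLpNorm g (ENNReal.ofReal p) volume := by
  intro g hg hgsupp φ Hg hHg
  have hp0 : 0 < p := by linarith
  set c : ℂ := Complex.exp (Complex.I * φ) with hc
  have hcnorm : ‖c‖ = 1 := by
    simp [hc, Complex.norm_exp]
  have hgc : Continuous g := hg.continuous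
  -- measurability of Hg
  have hseq : Tendsto (fun n : ℕ => (1:ℝ)/(n+1)) atTop (𝓝[>] (0:ℝ)) := by
    apply tendsto_nhdsWithin_of_tendsto_nhds_of_eventually_within
    · exact tendsto_one_div_add_atTop_nhds_zero_nat
    · exact Eventually.of_forall fun n => Set.mem_Ioi.2 (by positivity)
  have hHgm : StronglyMeasurable Hg := by
    apply stronglyMeasurable_of_tendsto (f := fun (n : ℕ) (z : ℂ) =>
        (1 / (π : ℂ)) * ∫ t in {t : ℝ | (1:ℝ)/(n+1) ≤ |t|}, g (z + t * c) / (t : ℂ)) atTop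
    · intro n
      exact (continuous_const.mul
        (hilb_cont g hgc hgsupp c hcnorm (by positivity))).stronglyMeasurable
    · exact tendsto_pi_nhds.2 fun z => (hHg z).comp hseq
  -- the measure-preserving rotation
  have hψ : MeasurePreserving
      (fun q : ℝ × ℝ => c * ((q.1 : ℂ) + (q.2 : ℂ) * Complex.I)) volume volume := by
    have hrot : MeasurePreserving (fun z : ℂ => c * z) volume volume := by
      have h := (rotation (Circle.exp φ)).measurePreserving
      have he : ⇑(rotation (Circle.exp φ)) = fun z : ℂ => c * z := by
        funext z; rw [rotation_apply, Circle.coe_exp, hc, mul_comm (φ : ℂ) Complex.I]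
      rwa [he] at h
    have hplane : MeasurePreserving
        (fun q : ℝ × ℝ => ((q.1 : ℂ) + (q.2 : ℂ) * Complex.I)) volume volume := by
      have h := Complex.volume_preserving_equiv_real_prod.symm
      have he : ⇑Complex.measurableEquivRealProd.symm =
          fun q : ℝ × ℝ => ((q.1 : ℂ) + (q.2 : ℂ) * Complex.I) := by
        funext q; simp [Complex.measurableEquivRealProd_symm_apply, Complex.mk_eq_add_mul_I]
      rwa [he] at h
    exact hrot.comp hplane
  set q : ℝ≥0∞ := ENNReal.ofReal p with hqdef
  have hq0 : q ≠ 0 := by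
    simp only [hqdef, ne_eq, ENNReal.ofReal_eq_zero, not_le]; linarith
  have hqT : q ≠ ⊤ := ENNReal.ofReal_ne_top
  have hqr : q.toReal = p := ENNReal.toReal_ofReal hp0.le
  -- per-line estimate
  have hline : ∀ y : ℝ,
      (∫⁻ x : ℝ, (‖Hg (c * ((x : ℂ) + (y : ℂ) * Complex.I))‖₊ : ℝ≥0∞) ^ p)
        ≤ (ENNReal.ofReal A) ^ p *
          ∫⁻ x : ℝ, (‖g (c * ((x : ℂ) + (y : ℂ) * Complex.I))‖₊ : ℝ≥0∞) ^ p := by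
    intro y
    set fy : ℝ → ℂ := fun x => g (c * ((x : ℂ) + (y : ℂ) * Complex.I)) with hfy
    set Hy : ℝ → ℂ := fun x => Hg (c * ((x : ℂ) + (y : ℂ) * Complex.I)) with hHy
    have hfy_cd : ContDiff ℝ (⊤ : ℕ∞) fy := by
      apply hg.comp
      exact contDiff_const.mul (Complex.ofRealCLM.contDiff.add contDiff_const)
    have hfy_cs : HasCompactSupport fy := by
      apply hgsupp.comp_isClosedEmbedding
      apply Isometry.isClosedEmbedding
      apply Isometry.of_dist_eq
      intro a b
      have heq : c * ((a : ℂ) + (y : ℂ) * Complex.I) - c * ((b : ℂ) + (y : ℂ) * Complex.I)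
          = c * (((a - b : ℝ) : ℂ)) := by push_cast; ring
      rw [dist_eq_norm, Real.dist_eq, heq, norm_mul, hcnorm, one_mul, Complex.norm_real,
        Real.norm_eq_abs]
    have htend : ∀ x : ℝ, Tendsto
        (fun ε : ℝ => (1 / (π : ℂ)) * ∫ y' in {y' : ℝ | ε ≤ |y' - x|}, fy y' / ((y' : ℂ) - x))
        (𝓝[>] 0) (𝓝 (Hy x)) := by
      intro x
      have h0 := hHg (c * ((x : ℂ) + (y : ℂ) * Complex.I))
      have heq : (fun ε : ℝ => (1 / (π : ℂ)) *
            ∫ y' in {y' : ℝ | ε ≤ |y' - x|}, fy y' / ((y' : ℂ) - x))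
          = fun ε : ℝ => (1 / (π : ℂ)) * ∫ t in {t : ℝ | ε ≤ |t|},
              g (c * ((x : ℂ) + (y : ℂ) * Complex.I) + (t : ℂ) * c) / (t : ℂ) := by
        funext ε
        rw [hfy, hilb_shift g c x y ε]
      rw [heq]
      exact h0
    have h := hHilbert fy hfy_cd hfy_cs Hy htend
    rw [eLpNorm_eq_lintegral_rpow_enorm_toReal hq0 hqT, eLpNorm_eq_lintegral_rpow_enorm_toReal hq0 hqT,
      hqr] at h
    have h2 := ENNReal.rpow_le_rpow h hp0.le
    rw [ENNReal.mul_rpow_of_nonneg _ _ hp0.le, ← ENNReal.rpow_mul, ← ENNReal.rpow_mul,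
      one_div, inv_mul_cancel₀ hp0.ne', ENNReal.rpow_one, ENNReal.rpow_one] at h2
    exact h2
  -- Fubini reduction
  have key : ∀ F : ℂ → ℝ≥0∞, Measurable F →
      (∫⁻ z : ℂ, F z) = ∫⁻ y : ℝ, ∫⁻ x : ℝ, F (c * ((x : ℂ) + (y : ℂ) * Complex.I)) := by
    intro F hF
    rw [← hψ.lintegral_comp hF, Measure.volume_eq_prod ℝ ℝ, lintegral_prod_symm]
    exact ((hF.comp hψ.measurable)).aemeasurable
  have hΦ : Measurable fun z : ℂ => (‖Hg z‖₊ : ℝ≥0∞) ^ p :=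
    (ENNReal.continuous_rpow_const.measurable).comp hHgm.measurable.enorm
  have hΓ : Measurable fun z : ℂ => (‖g z‖₊ : ℝ≥0∞) ^ p :=
    (ENNReal.continuous_rpow_const.measurable).comp hgc.measurable.enorm
  have hAp : (ENNReal.ofReal A) ^ p ≠ ⊤ := by
    exact ENNReal.rpow_ne_top_of_nonneg hp0.le ENNReal.ofReal_ne_top
  have main : (∫⁻ z : ℂ, (‖Hg z‖₊ : ℝ≥0∞) ^ p)
      ≤ (ENNReal.ofReal A) ^ p * ∫⁻ z : ℂ, (‖g z‖₊ : ℝ≥0∞) ^ p := by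
    rw [key _ hΦ, key _ hΓ, ← lintegral_const_mul' _ _ hAp]
    exact lintegral_mono fun y => (hline y).trans
      (le_of_eq (lintegral_const_mul' _ _ hAp).symm) |>.trans
      (le_of_eq (lintegral_const_mul' _ _ hAp))
  have final : eLpNorm Hg q volume ≤ ENNReal.ofReal A * eLpNorm g q volume := by
    rw [eLpNorm_eq_lintegral_rpow_enorm_toReal hq0 hqT, eLpNorm_eq_lintegral_rpow_enorm_toReal hq0 hqT, hqr]
    calc (∫⁻ z : ℂ, (‖Hg z‖₊ : ℝ≥0∞) ^ p) ^ (1 / p)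
        ≤ ((ENNReal.ofReal A) ^ p * ∫⁻ z : ℂ, (‖g z‖₊ : ℝ≥0∞) ^ p) ^ (1 / p) :=
          ENNReal.rpow_le_rpow main (by positivity)
      _ = ENNReal.ofReal A * (∫⁻ z : ℂ, (‖g z‖₊ : ℝ≥0∞) ^ p) ^ (1 / p) := by
          rw [ENNReal.mul_rpow_of_nonneg _ _ (by positivity), ← ENNReal.rpow_mul,
            mul_one_div_cancel hp0.ne', ENNReal.rpow_one]
  have memg : MemLp g q volume := hgc.memLp_of_hasCompactSupport hgsupp
  refine ⟨⟨hHgm.aestronglyMeasurable, ?_⟩, final⟩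
  exact lt_of_le_of_lt final (ENNReal.mul_lt_top ENNReal.ofReal_lt_top memg.eLpNorm_lt_top)
end

section
/- Let 1 < q < 2, a ≥ 2 and b ≥ 1/2 + 1/a be real numbers, and let z ∈ ℂ with z ≠ 0. Let D₁ := {ξ ∈ ℂ : |ξ − z| < |z|/a}, D₂ := {ξ ∈ ℂ : |ξ| < |z|/a}, and D₃ := ℂ \ (D₁ ∪ D₂). Then ∫_{D₃} ( |z| / (|ξ − z|·|ξ|) )^q dA(ξ) ≤ [ a^{2q}·π·(b² − 2/a²) + π·(b² − 1/4)^{1−q}/(q−1) ] · |z|^{2−q}. -/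
open MeasureTheory Real Set Metric Filter Topology

/-!
Split `D₃` by the circle `‖ξ - z/2‖ = b‖z‖`. Inside it, both `‖ξ - z‖` and `‖ξ‖` are at least
`‖z‖/a`, so the integrand is at most `(a²/‖z‖)^q`; the disc of radius `b‖z‖` around `z/2` contains
the two disjoint discs of radius `‖z‖/a`, leaving area `π(b² - 2/a²)‖z‖²`. Outside it, the identity
`(ξ - z)ξ = (ξ - z/2)² - (z/2)²` gives `‖ξ - z‖‖ξ‖ ≥ s² - ‖z‖²/4` with `s = ‖ξ - z/2‖`, and the
radial majorant integrates to `2π ∫_{b‖z‖}^∞ s ‖z‖^q (s² - ‖z‖²/4)^{-q} ds`, which is finite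
because `q > 1`.
-/

section RadialIntegral

variable {q c R : ℝ}

theorem hasDerivAt_sq_sub_rpow_div {y : ℝ} (hq : q ≠ 1) (hy : c < y ^ 2) :
    HasDerivAt (fun y : ℝ => (y ^ 2 - c) ^ (1 - q) / (2 * (1 - q)))
      (y * (y ^ 2 - c) ^ (-q)) y := by
  have hpos : 0 < y ^ 2 - c := by linarith
  have h := (((hasDerivAt_pow 2 y).sub_const c).rpow_const (p := 1 - q)
    (Or.inl hpos.ne')).div_const (2 * (1 - q))
  refine h.congr_deriv ?_
  rw [show 1 - q - 1 = -q by ring]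
  field_simp [sub_ne_zero.2 hq.symm]
  push_cast
  ring

theorem tendsto_sq_sub_rpow_div_atTop (hq : 1 < q) (c : ℝ) :
    Tendsto (fun y : ℝ => (y ^ 2 - c) ^ (1 - q) / (2 * (1 - q))) atTop (𝓝 0) := by
  have h : Tendsto (fun y : ℝ => (y ^ 2 - c) ^ (-(q - 1))) atTop (𝓝 0) :=
    (tendsto_rpow_neg_atTop (by linarith)).comp
      (tendsto_atTop_add_const_right _ (-c) (tendsto_pow_atTop two_ne_zero))
  simpa [neg_sub] using h.div_const (2 * (1 - q))

theorem lt_sq_of_mem_Ici (hR : 0 < R) (hcR : c < R ^ 2) {y : ℝ} (hy : y ∈ Ici R) :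
    c < y ^ 2 := by
  have : R ≤ y := hy
  nlinarith

theorem mul_sq_sub_rpow_neg_nonneg (hR : 0 < R) (hcR : c < R ^ 2) {y : ℝ} (hy : y ∈ Ioi R) :
    0 ≤ y * (y ^ 2 - c) ^ (-q) := by
  have hy0 : 0 < y := hR.trans hy
  have := lt_sq_of_mem_Ici hR hcR (Ioi_subset_Ici_self hy)
  exact mul_nonneg hy0.le (rpow_nonneg (by linarith) _)

theorem integrableOn_Ioi_mul_sq_sub_rpow_neg (hq : 1 < q) (hR : 0 < R) (hcR : c < R ^ 2) :
    IntegrableOn (fun y : ℝ => y * (y ^ 2 - c) ^ (-q)) (Ioi R) :=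
  integrableOn_Ioi_deriv_of_nonneg'
    (fun _ hy => hasDerivAt_sq_sub_rpow_div hq.ne' (lt_sq_of_mem_Ici hR hcR hy))
    (fun _ hy => mul_sq_sub_rpow_neg_nonneg hR hcR hy) (tendsto_sq_sub_rpow_div_atTop hq c)

theorem integral_Ioi_mul_sq_sub_rpow_neg (hq : 1 < q) (hR : 0 < R) (hcR : c < R ^ 2) :
    ∫ y in Ioi R, y * (y ^ 2 - c) ^ (-q) = (R ^ 2 - c) ^ (1 - q) / (2 * (q - 1)) := by
  rw [integral_Ioi_of_hasDerivAt_of_nonneg'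
    (fun _ hy => hasDerivAt_sq_sub_rpow_div hq.ne' (lt_sq_of_mem_Ici hR hcR hy))
    (fun _ hy => mul_sq_sub_rpow_neg_nonneg hR hcR hy) (tendsto_sq_sub_rpow_div_atTop hq c)]
  have : 1 - q ≠ 0 := by linarith
  have : q - 1 ≠ 0 := by linarith
  field_simp
  ring

end RadialIntegral

theorem Complex.lintegral_ofReal_comp_norm {g : ℝ → ℝ} (hg : ∀ s, 0 ≤ g s)
    (hint : IntegrableOn (fun s => s * g s) (Ioi 0)) :
    ∫⁻ ξ : ℂ, ENNReal.ofReal (g ‖ξ‖) = ENNReal.ofReal (2 * π * ∫ s in Ioi 0, s * g s) := by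
  have hint' : Integrable (fun ξ : ℂ => g ‖ξ‖) :=
    (integrable_fun_norm_addHaar volume).2 (by simpa [Complex.finrank_real_complex] using hint)
  rw [← ofReal_integral_eq_lintegral_ofReal hint' (ae_of_all _ fun ξ => hg _),
    integral_fun_norm_addHaar]
  simp [Complex.finrank_real_complex, Measure.real, NNReal.coe_real_pi, mul_assoc,
    ENNReal.ofReal_mul]

theorem Complex.sq_norm_sub_half_sub_le (ξ z : ℂ) :
    ‖ξ - z / 2‖ ^ 2 - ‖z‖ ^ 2 / 4 ≤ ‖ξ - z‖ * ‖ξ‖ :=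
  calc ‖ξ - z / 2‖ ^ 2 - ‖z‖ ^ 2 / 4 = ‖(ξ - z / 2) ^ 2‖ - ‖(z / 2) ^ 2‖ := by
        simp only [norm_pow, norm_div, Complex.norm_two]; ring
    _ ≤ ‖(ξ - z / 2) ^ 2 - (z / 2) ^ 2‖ := norm_sub_norm_le _ _
    _ = ‖ξ - z‖ * ‖ξ‖ := by rw [← norm_mul]; ring_nf

theorem ENNReal.ofReal_sq_mul_pi {r : ℝ} (hr : 0 ≤ r) :
    ENNReal.ofReal r ^ 2 * NNReal.pi = ENNReal.ofReal (π * r ^ 2) := by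
  rw [← ENNReal.ofReal_pow hr, mul_comm, ← ENNReal.ofReal_coe_nnreal, NNReal.coe_real_pi,
    ← ENNReal.ofReal_mul pi_nonneg]

theorem Complex.volume_closedBall_diff_union_ball {c w₁ w₂ : ℂ} {ρ R : ℝ} (hρ : 0 ≤ ρ)
    (hw : 2 * ρ ≤ dist w₁ w₂) (h₁ : ρ + dist w₁ c ≤ R) (h₂ : ρ + dist w₂ c ≤ R) :
    volume (closedBall c R \ (ball w₁ ρ ∪ ball w₂ ρ)) =
      ENNReal.ofReal (π * (R ^ 2 - 2 * ρ ^ 2)) := by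
  have hR : 0 ≤ R := by linarith [dist_nonneg (x := w₁) (y := c)]
  have hdisj : Disjoint (ball w₁ ρ) (ball w₂ ρ) := ball_disjoint_ball (by linarith)
  have hsub : ball w₁ ρ ∪ ball w₂ ρ ⊆ closedBall c R :=
    union_subset (ball_subset_closedBall.trans (closedBall_subset_closedBall' h₁))
      (ball_subset_closedBall.trans (closedBall_subset_closedBall' h₂))
  have hunion : volume (ball w₁ ρ ∪ ball w₂ ρ) = ENNReal.ofReal (2 * (π * ρ ^ 2)) := by
    rw [measure_union hdisj measurableSet_ball, Complex.volume_ball, Complex.volume_ball,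
      ENNReal.ofReal_sq_mul_pi hρ, ← ENNReal.ofReal_add (by positivity) (by positivity), two_mul]
  rw [measure_sdiff hsub (measurableSet_ball.union measurableSet_ball).nullMeasurableSet
    (by rw [hunion]; exact ENNReal.ofReal_ne_top), hunion, Complex.volume_closedBall,
    ENNReal.ofReal_sq_mul_pi hR, ← ENNReal.ofReal_sub _ (by positivity)]
  ring_nf

theorem setLIntegral_cauchyKernel_le_of_le_norm {q ρ : ℝ} (hq : 0 ≤ q) (hρ : 0 < ρ) (z : ℂ)
    {s : Set ℂ} (hs : MeasurableSet s) (h : ∀ ξ ∈ s, ρ ≤ ‖ξ - z‖ ∧ ρ ≤ ‖ξ‖) :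
    ∫⁻ ξ in s, ENNReal.ofReal ((‖z‖ / (‖ξ - z‖ * ‖ξ‖)) ^ q) ≤
      ENNReal.ofReal ((‖z‖ / ρ ^ 2) ^ q) * volume s := by
  refine (setLIntegral_mono' hs fun ξ hξ => ?_).trans_eq (setLIntegral_const _ _)
  obtain ⟨h₁, h₂⟩ := h ξ hξ
  have : ρ ^ 2 ≤ ‖ξ - z‖ * ‖ξ‖ := by nlinarith
  gcongr

theorem setLIntegral_cauchyKernel_near_le {q ρ R : ℝ} (hq : 0 ≤ q) (hρ : 0 < ρ) (z : ℂ)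
    (h2ρ : 2 * ρ ≤ ‖z‖) (hR : ρ + ‖z‖ / 2 ≤ R) :
    ∫⁻ ξ in closedBall (z / 2) R \ (ball z ρ ∪ ball 0 ρ),
        ENNReal.ofReal ((‖z‖ / (‖ξ - z‖ * ‖ξ‖)) ^ q) ≤
      ENNReal.ofReal ((‖z‖ / ρ ^ 2) ^ q * (π * (R ^ 2 - 2 * ρ ^ 2))) := by
  have hdist₁ : dist z (z / 2) = ‖z‖ / 2 := by
    rw [dist_eq_norm, sub_half, norm_div, Complex.norm_two]
  have hdist₂ : dist 0 (z / 2) = ‖z‖ / 2 := by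
    rw [dist_comm, dist_zero_right, norm_div, Complex.norm_two]
  have hmeas : MeasurableSet (closedBall (z / 2) R \ (ball z ρ ∪ ball 0 ρ)) :=
    measurableSet_closedBall.diff (measurableSet_ball.union measurableSet_ball)
  have houtside : ∀ ξ ∈ closedBall (z / 2) R \ (ball z ρ ∪ ball 0 ρ),
      ρ ≤ ‖ξ - z‖ ∧ ρ ≤ ‖ξ‖ := by
    rintro ξ ⟨-, hξ⟩
    simpa [not_or, mem_ball, dist_eq_norm] using hξ
  refine (setLIntegral_cauchyKernel_le_of_le_norm hq hρ z hmeas houtside).trans_eq ?_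
  rw [Complex.volume_closedBall_diff_union_ball hρ.le (by rwa [dist_zero_right])
    (by rw [hdist₁]; linarith) (by rw [hdist₂]; linarith), ← ENNReal.ofReal_mul (by positivity)]

theorem setLIntegral_cauchyKernel_far_le {q R : ℝ} (hq : 1 < q) (z : ℂ) (hR : ‖z‖ / 2 < R) :
    ∫⁻ ξ in {ξ : ℂ | R < ‖ξ - z / 2‖}, ENNReal.ofReal ((‖z‖ / (‖ξ - z‖ * ‖ξ‖)) ^ q) ≤
      ENNReal.ofReal (π * ‖z‖ ^ q * (R ^ 2 - ‖z‖ ^ 2 / 4) ^ (1 - q) / (q - 1)) := by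
  have hR0 : 0 < R := (by positivity : 0 ≤ ‖z‖ / 2).trans_lt hR
  have hcR : ‖z‖ ^ 2 / 4 < R ^ 2 := by nlinarith [norm_nonneg z]
  set c := ‖z‖ ^ 2 / 4
  have hpos : ∀ s ∈ Ioi R, 0 < s ^ 2 - c := fun s hs =>
    sub_pos.2 (lt_sq_of_mem_Ici hR0 hcR (Ioi_subset_Ici_self hs))
  set g : ℝ → ℝ := (Ioi R).indicator fun s => ‖z‖ ^ q * (s ^ 2 - c) ^ (-q) with hg_def
  have hg : ∀ s, 0 ≤ g s := fun s =>
    indicator_nonneg (fun s hs => by have := hpos s hs; positivity) s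
  have hmul : (fun s => s * g s) =
      (Ioi R).indicator fun s => ‖z‖ ^ q * (s * (s ^ 2 - c) ^ (-q)) := by
    ext s
    by_cases hs : s ∈ Ioi R <;> simp [g, hs, mul_left_comm]
  have hint : IntegrableOn (fun s => s * g s) (Ioi 0) := by
    rw [hmul]
    exact ((integrable_indicator_iff measurableSet_Ioi).2
      ((integrableOn_Ioi_mul_sq_sub_rpow_neg hq hR0 hcR).const_mul _)).integrableOn
  have hkernel : ∀ ξ ∈ {ξ : ℂ | R < ‖ξ - z / 2‖},
      ENNReal.ofReal ((‖z‖ / (‖ξ - z‖ * ‖ξ‖)) ^ q) ≤ ENNReal.ofReal (g ‖ξ - z / 2‖) := by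
    intro ξ hξ
    have hs := hpos _ hξ
    have hg_eq : g ‖ξ - z / 2‖ = (‖z‖ / (‖ξ - z / 2‖ ^ 2 - c)) ^ q := by
      rw [hg_def, indicator_of_mem (show ‖ξ - z / 2‖ ∈ Ioi R from hξ),
        div_rpow (norm_nonneg z) hs.le, rpow_neg hs.le, ← div_eq_mul_inv]
    have := Complex.sq_norm_sub_half_sub_le ξ z
    rw [hg_eq]
    gcongr
  calc _ ≤ ∫⁻ ξ in {ξ : ℂ | R < ‖ξ - z / 2‖}, ENNReal.ofReal (g ‖ξ - z / 2‖) :=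
        setLIntegral_mono' (measurableSet_lt measurable_const (by fun_prop)) hkernel
    _ ≤ ∫⁻ ξ, ENNReal.ofReal (g ‖ξ - z / 2‖) := setLIntegral_le_lintegral _ _
    _ = ∫⁻ ξ, ENNReal.ofReal (g ‖ξ‖) :=
        lintegral_sub_right_eq_self (fun ξ => ENNReal.ofReal (g ‖ξ‖)) _
    _ = ENNReal.ofReal (2 * π * ∫ s in Ioi 0, s * g s) := Complex.lintegral_ofReal_comp_norm hg hint
    _ = _ := by
      rw [hmul, setIntegral_indicator measurableSet_Ioi, inter_eq_right.2 (Ioi_subset_Ioi hR0.le),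
        integral_const_mul, integral_Ioi_mul_sq_sub_rpow_neg hq hR0 hcR]
      have : q - 1 ≠ 0 := by linarith
      field_simp

theorem setLIntegral_cauchyKernel_near_le_of_two_le {q a b : ℝ} (hq : 0 ≤ q) (ha : 2 ≤ a)
    (hb : 1 / 2 + 1 / a ≤ b) {z : ℂ} (hz : z ≠ 0) :
    ∫⁻ ξ in closedBall (z / 2) (b * ‖z‖) \ (ball z (‖z‖ / a) ∪ ball 0 (‖z‖ / a)),
        ENNReal.ofReal ((‖z‖ / (‖ξ - z‖ * ‖ξ‖)) ^ q) ≤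
      ENNReal.ofReal (a ^ (2 * q) * π * (b ^ 2 - 2 / a ^ 2) * ‖z‖ ^ (2 - q)) := by
  have hr : 0 < ‖z‖ := norm_pos_iff.2 hz
  have ha0 : 0 < a := by linarith
  have h2ρ : 2 * (‖z‖ / a) ≤ ‖z‖ := by rw [mul_div_assoc', div_le_iff₀ ha0]; nlinarith
  have hρR : ‖z‖ / a + ‖z‖ / 2 ≤ b * ‖z‖ :=
    calc ‖z‖ / a + ‖z‖ / 2 = (1 / 2 + 1 / a) * ‖z‖ := by ring
      _ ≤ b * ‖z‖ := by gcongr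
  refine (setLIntegral_cauchyKernel_near_le hq (by positivity) z h2ρ hρR).trans_eq ?_
  congr 1
  rw [show ‖z‖ / (‖z‖ / a) ^ 2 = a ^ 2 / ‖z‖ by field_simp, div_rpow (by positivity) hr.le,
    rpow_mul ha0.le, rpow_two, rpow_sub hr, rpow_two]
  field_simp

theorem setLIntegral_cauchyKernel_far_le_of_half_lt {q b : ℝ} (hq : 1 < q) (hb : 1 / 2 < b)
    {z : ℂ} (hz : z ≠ 0) :
    ∫⁻ ξ in {ξ : ℂ | b * ‖z‖ < ‖ξ - z / 2‖}, ENNReal.ofReal ((‖z‖ / (‖ξ - z‖ * ‖ξ‖)) ^ q) ≤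
      ENNReal.ofReal (π * (b ^ 2 - 1 / 4) ^ (1 - q) / (q - 1) * ‖z‖ ^ (2 - q)) := by
  have hr : 0 < ‖z‖ := norm_pos_iff.2 hz
  have hb14 : 0 ≤ b ^ 2 - 1 / 4 := by nlinarith
  refine (setLIntegral_cauchyKernel_far_le hq z (by nlinarith)).trans_eq ?_
  congr 1
  rw [show (b * ‖z‖) ^ 2 - ‖z‖ ^ 2 / 4 = (b ^ 2 - 1 / 4) * ‖z‖ ^ 2 by ring,
    mul_rpow hb14 (by positivity), ← rpow_pow_comm hr.le, rpow_sub hr, rpow_sub hr, rpow_one,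
    rpow_two]
  have : ‖z‖ ^ q ≠ 0 := (rpow_pos_of_pos hr q).ne'
  field_simp

theorem stmt5_general (q a b : ℝ) (hq1 : 1 < q) (ha : 2 ≤ a)
    (hb : 1 / 2 + 1 / a ≤ b) (z : ℂ) (hz : z ≠ 0) :
    ∫⁻ ξ in (Set.univ : Set ℂ) \
        ({ξ : ℂ | ‖ξ - z‖ < ‖z‖ / a} ∪
          {ξ : ℂ | ‖ξ‖ < ‖z‖ / a}),
        ENNReal.ofReal ((‖z‖ / (‖ξ - z‖ * ‖ξ‖)) ^ q) ≤
      ENNReal.ofReal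
        ((a ^ (2 * q) * π * (b ^ 2 - 2 / a ^ 2) +
            π * (b ^ 2 - 1 / 4) ^ (1 - q) / (q - 1)) * ‖z‖ ^ (2 - q)) := by
  have ha0 : 0 < a := by linarith
  have ht : 0 < 1 / a ∧ 1 / a ≤ 1 / 2 := ⟨by positivity, by gcongr⟩
  have hcover : univ \ ({ξ : ℂ | ‖ξ - z‖ < ‖z‖ / a} ∪ {ξ : ℂ | ‖ξ‖ < ‖z‖ / a}) ⊆
      (closedBall (z / 2) (b * ‖z‖) \ (ball z (‖z‖ / a) ∪ ball 0 (‖z‖ / a))) ∪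
        {ξ : ℂ | b * ‖z‖ < ‖ξ - z / 2‖} := by
    intro ξ hξ
    by_cases h : ‖ξ - z / 2‖ ≤ b * ‖z‖
    · exact Or.inl ⟨by simpa [dist_eq_norm] using h, by simpa [dist_eq_norm] using hξ⟩
    · exact Or.inr (not_le.1 h)
  have hnear_nonneg : 0 ≤ a ^ (2 * q) * π * (b ^ 2 - 2 / a ^ 2) * ‖z‖ ^ (2 - q) := by
    have : 2 / a ^ 2 ≤ b ^ 2 := by
      rw [show 2 / a ^ 2 = 2 * (1 / a) ^ 2 by ring]
      nlinarith
    have := sub_nonneg.2 this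
    positivity
  have hfar_nonneg : 0 ≤ π * (b ^ 2 - 1 / 4) ^ (1 - q) / (q - 1) * ‖z‖ ^ (2 - q) := by
    have : 0 ≤ b ^ 2 - 1 / 4 := by nlinarith
    have : 0 < q - 1 := by linarith
    positivity
  calc _ ≤ _ := lintegral_mono_set hcover
    _ ≤ _ := lintegral_union_le _ _ _
    _ ≤ _ := add_le_add (setLIntegral_cauchyKernel_near_le_of_two_le (by linarith) ha hb hz)
        (setLIntegral_cauchyKernel_far_le_of_half_lt hq1 (by linarith) hz)
    _ = _ := by rw [← ENNReal.ofReal_add hnear_nonneg hfar_nonneg, add_mul]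

/-- bound on the `L_q` integral of the Cauchy kernel `z/((ξ-z)ξ)` over
`D₃ = ℂ \ (D₁ ∪ D₂)`, where `D₁ = {|ξ-z| < |z|/a}` and `D₂ = {|ξ| < |z|/a}`. -/
theorem stmt5 (q a b : ℝ) (hq1 : 1 < q) (hq2 : q < 2) (ha : 2 ≤ a)
    (hb : 1 / 2 + 1 / a ≤ b) (z : ℂ) (hz : z ≠ 0) :
    ∫⁻ ξ in (Set.univ : Set ℂ) \
        ({ξ : ℂ | ‖ξ - z‖ < ‖z‖ / a} ∪
          {ξ : ℂ | ‖ξ‖ < ‖z‖ / a}),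
        ENNReal.ofReal ((‖z‖ / (‖ξ - z‖ * ‖ξ‖)) ^ q) ≤
      ENNReal.ofReal
        ((a ^ (2 * q) * π * (b ^ 2 - 2 / a ^ 2) +
            π * (b ^ 2 - 1 / 4) ^ (1 - q) / (q - 1)) * ‖z‖ ^ (2 - q)) :=
  stmt5_general q a b hq1 ha hb z hz
end

section
/- Let κ, ξ, ζ₊, ζ₋ ∈ ℂ with κ ≠ 0, and set α₊ := (ζ₊ − ξ)/κ and α₋ := (ζ₋ − ξ)/κ. Assume Im(α₊) ≠ 0 and Im(α₋) ≠ 0. Then (1/(2π))·[ ∫₀^π (κα + ζ₊ + ξ)/(κα + ζ₊ − ξ) dα + ∫_{−π}^0 (κα + ζ₋ + ξ)/(κα + ζ₋ − ξ) dα ] = 1 + (ξ/(π κ))·[ Log(1 + π/α₊) − Log(1 − π/α₋) ], where Log denotes the principal branch of the complex logarithm. -/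
/-!
The integrand is `1 + (2ξ/κ) (x + α)⁻¹` with `α = (ζ - ξ)/κ`. Its antiderivative
`x ↦ log (1 + x/α)` has no branch problem: `1 + x/α` equals `1` at `x = 0` and has nonzero
imaginary part elsewhere, so it never leaves the slit plane, and it vanishes at the endpoint `0`
shared by both integrals.
-/

open Real intervalIntegral

namespace Complex

variable {α : ℂ}

lemma ofReal_add_ne_zero (hα : α.im ≠ 0) (x : ℝ) : (x : ℂ) + α ≠ 0 :=
  fun h => hα (by simpa using congrArg im h)

lemma continuous_ofReal_add_inv (hα : α.im ≠ 0) : Continuous fun x : ℝ => ((x : ℂ) + α)⁻¹ :=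
  (continuous_ofReal.add continuous_const).inv₀ (ofReal_add_ne_zero hα)

lemma one_add_ofReal_div_mem_slitPlane (hα : α.im ≠ 0) (x : ℝ) : 1 + x / α ∈ slitPlane := by
  rcases eq_or_ne x 0 with rfl | hx
  · simp
  refine mem_slitPlane_iff.mpr (Or.inr ?_)
  have hα0 : normSq α ≠ 0 := normSq_eq_zero.not.mpr fun h => hα (by simp [h])
  simp [div_eq_mul_inv, inv_im, hx, hα, hα0]

lemma integral_ofReal_add_inv (hα : α.im ≠ 0) (a b : ℝ) :
    ∫ x in a..b, ((x : ℂ) + α)⁻¹ = log (1 + b / α) - log (1 + a / α) := by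
  have hα0 : α ≠ 0 := fun h => hα (by simp [h])
  refine integral_eq_sub_of_hasDerivAt (f := fun x : ℝ => log (1 + x / α)) (fun x _ => ?_)
    ((continuous_ofReal_add_inv hα).intervalIntegrable a b)
  refine ((((hasDerivAt_id x).ofReal_comp.div_const α).const_add 1).clog_real
    (one_add_ofReal_div_mem_slitPlane hα x)).congr_deriv ?_
  simp only [id, ofReal_one]
  rw [one_add_div hα0, div_div_div_cancel_right₀ hα0, one_div, add_comm]

end Complex

open Complex in
theorem integral_mul_add_add_div_mul_add_sub {κ ξ ζ α : ℂ} (hα : α = (ζ - ξ) / κ)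
    (him : α.im ≠ 0) (a b : ℝ) :
    ∫ x in a..b, (κ * x + ζ + ξ) / (κ * x + ζ - ξ) =
      (b - a : ℂ) + 2 * ξ / κ * (log (1 + b / α) - log (1 + a / α)) := by
  -- `(ζ - ξ) / 0 = 0` has imaginary part `0`
  have hκ : κ ≠ 0 := by rintro rfl; simp [hα] at him
  have hζ : ζ = κ * α + ξ := by rw [hα]; field_simp; ring
  have hsplit (x : ℝ) :
      (κ * x + ζ + ξ) / (κ * x + ζ - ξ) = 1 + 2 * ξ / κ * ((x : ℂ) + α)⁻¹ := by
    rw [hζ, show κ * x + (κ * α + ξ) - ξ = κ * ((x : ℂ) + α) by ring]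
    field_simp [ofReal_add_ne_zero him x]
    ring
  simp_rw [hsplit]
  rw [integral_add intervalIntegrable_const
      (((continuous_ofReal_add_inv him).intervalIntegrable a b).const_mul _),
    integral_const_mul, integral_ofReal_add_inv him]
  simp

theorem stmt15_general (κ ξ ζp ζm αp αm : ℂ)
    (hαp : αp = (ζp - ξ) / κ) (hαm : αm = (ζm - ξ) / κ)
    (hip : αp.im ≠ 0) (him : αm.im ≠ 0) :
    (1 / (2 * (π : ℂ))) *
        ((∫ α in (0 : ℝ)..π, (κ * α + ζp + ξ) / (κ * α + ζp - ξ)) +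
          ∫ α in (-π : ℝ)..0, (κ * α + ζm + ξ) / (κ * α + ζm - ξ)) =
      1 + (ξ / ((π : ℂ) * κ)) *
        (Complex.log (1 + (π : ℂ) / αp) - Complex.log (1 - (π : ℂ) / αm)) := by
  rw [integral_mul_add_add_div_mul_add_sub hαp hip, integral_mul_add_add_div_mul_add_sub hαm him]
  have hκ : κ ≠ 0 := by rintro rfl; simp [hαp] at hip
  have hπ : (π : ℂ) ≠ 0 := Complex.ofReal_ne_zero.mpr pi_ne_zero
  push_cast
  simp only [zero_div, add_zero, Complex.log_one, neg_div, ← sub_eq_add_neg]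
  field_simp
  ring

/-- computation of the Fourier coefficient `μ₂(r)` in Section 9 of the
paper: with `α₊ = (ζ₊-ξ)/κ`, `α₋ = (ζ₋-ξ)/κ` having nonzero imaginary parts,
`(1/2π)[∫₀^π (κα+ζ₊+ξ)/(κα+ζ₊-ξ) dα + ∫_{-π}^0 (κα+ζ₋+ξ)/(κα+ζ₋-ξ) dα]
  = 1 + (ξ/(πκ))[Log(1+π/α₊) - Log(1-π/α₋)]`. -/
theorem stmt15 (κ ξ ζp ζm αp αm : ℂ) (hκ : κ ≠ 0)
    (hαp : αp = (ζp - ξ) / κ) (hαm : αm = (ζm - ξ) / κ)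
    (hip : αp.im ≠ 0) (him : αm.im ≠ 0) :
    (1 / (2 * (π : ℂ))) *
        ((∫ α in (0 : ℝ)..π, (κ * α + ζp + ξ) / (κ * α + ζp - ξ)) +
          ∫ α in (-π : ℝ)..0, (κ * α + ζm + ξ) / (κ * α + ζm - ξ)) =
      1 + (ξ / ((π : ℂ) * κ)) *
        (Complex.log (1 + (π : ℂ) / αp) - Complex.log (1 - (π : ℂ) / αm)) :=
  stmt15_general κ ξ ζp ζm αp αm hαp hαm hip him
end
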